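/- The affine plane curve s² = (t² − 2t − 1)(t² + 2t − 1) is birationally equivalent over ℚ to the elliptic curve y² = x³ − x. -/

import Mathlib

open MvPolynomial

set_option synthInstance.maxHeartbeats 400000

/-- The coordinate ring of the affine quartic curve `s² = (t² − 2t − 1)(t² + 2t − 1)`,
with `X 0 = t` and `X 1 = s`. -/
abbrev quarticCurveRing : Type :=
  MvPolynomial (Fin 2) ℚ ⧸ Ideal.span
    {(X 1 : MvPolynomial (Fin 2) ℚ) ^ 2 -
      ((X 0) ^ 2 - 2 * X 0 - 1) * ((X 0) ^ 2 + 2 * X 0 - 1)}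

/-- The coordinate ring of the affine elliptic curve `y² = x³ − x`,
with `X 0 = x` and `X 1 = y`. -/
abbrev ellipticCurveRing : Type :=
  MvPolynomial (Fin 2) ℚ ⧸ Ideal.span
    {(X 1 : MvPolynomial (Fin 2) ℚ) ^ 2 - ((X 0) ^ 3 - X 0)}

/-!
Both defining polynomials have the shape `s² - p(t)` with `p` negative somewhere, so `p` is not a
square and, by Gauss's lemma, `s² - p(t)` is prime: both coordinate rings are domains. The
polynomial map `(t, s) ↦ ((s + t² - 1) / 2, t (s + t² - 3) / 2)` sends the quartic to `E`, and
`(x, y) ↦ (y / (x - 1), (x² - 2x - 1) / (x - 1))` is a rational inverse (along it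
`s + t² = 2x + 1`). The induced homomorphisms of function fields are then mutually inverse, as
they are so on the generators.
-/

theorem Polynomial.prime_X_sq_sub_C {R : Type*} [CommRing R] [IsDomain R]
    [UniqueFactorizationMonoid R] {c : R} (hc : ∀ u : R, u ^ 2 ≠ c) :
    Prime (Polynomial.X ^ 2 - Polynomial.C c : Polynomial R) := by
  rw [← UniqueFactorizationMonoid.irreducible_iff_prime,
    (Polynomial.monic_X_pow_sub_C c two_ne_zero).irreducible_iff_irreducible_map_fraction_map
      (K := FractionRing R),
    Polynomial.map_sub, Polynomial.map_pow, Polynomial.map_X, Polynomial.map_C]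
  refine X_pow_sub_C_irreducible_of_prime Nat.prime_two fun b hb => ?_
  obtain ⟨u, rfl⟩ := IsIntegrallyClosed.exists_algebraMap_eq_of_isIntegral_pow two_pos
    (hb ▸ isIntegral_algebraMap)
  exact hc u (IsFractionRing.injective R (FractionRing R) (by rw [map_pow, hb]))

theorem Polynomial.pow_two_ne_of_eval_neg {R : Type*} [CommRing R] [LinearOrder R]
    [IsStrictOrderedRing R] {p : Polynomial R} {r : R} (hr : p.eval r < 0) (u : Polynomial R) :
    u ^ 2 ≠ p := by
  rintro rfl
  rw [Polynomial.eval_pow] at hr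
  exact (sq_nonneg _).not_gt hr

namespace MvPolynomial

section Bivariate

variable (R : Type*) [CommSemiring R]

noncomputable def bivariateEquiv : MvPolynomial (Fin 2) R ≃ₐ[R] Polynomial (Polynomial R) :=
  (renameEquiv R (Equiv.swap 0 1)).trans
    ((finSuccEquiv R 1).trans (Polynomial.mapAlgEquiv (uniqueAlgEquiv R (Fin 1))))

theorem bivariateEquiv_X_zero : bivariateEquiv R (X 0) = Polynomial.C Polynomial.X := by
  simp only [bivariateEquiv, AlgEquiv.trans_apply, renameEquiv_apply, rename_X,
    Equiv.swap_apply_left]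
  rw [show (1 : Fin 2) = Fin.succ 0 from rfl, finSuccEquiv_X_succ]
  simp

theorem bivariateEquiv_X_one : bivariateEquiv R (X 1) = Polynomial.X := by
  simp [bivariateEquiv, finSuccEquiv_X_zero]

theorem bivariateEquiv_aeval_X_zero (p : Polynomial R) :
    bivariateEquiv R (Polynomial.aeval (X 0) p) = Polynomial.C p := by
  rw [← Polynomial.aeval_algHom_apply, bivariateEquiv_X_zero,
    show (Polynomial.C Polynomial.X : Polynomial (Polynomial R)) =
      Polynomial.CAlgHom (R := R) (A := Polynomial R) Polynomial.X from rfl,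
    Polynomial.aeval_algHom_apply, Polynomial.aeval_X_left_apply]
  rfl

end Bivariate

theorem prime_X_one_sq_sub_aeval {R : Type*} [CommRing R] [IsDomain R]
    [UniqueFactorizationMonoid R] {p : Polynomial R} (hp : ∀ u, u ^ 2 ≠ p) :
    Prime (X 1 ^ 2 - Polynomial.aeval (X 0) p : MvPolynomial (Fin 2) R) := by
  rw [← MulEquiv.prime_iff (bivariateEquiv R), map_sub, map_pow, bivariateEquiv_X_one,
    bivariateEquiv_aeval_X_zero]
  exact Polynomial.prime_X_sq_sub_C hp

end MvPolynomial

theorem Ideal.Quotient.isDomain_span_singleton {R : Type*} [CommRing R] {p : R} (hp : Prime p) :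
    IsDomain (R ⧸ Ideal.span {p}) :=
  (Ideal.Quotient.isDomain_iff_prime _).2 ((Ideal.span_singleton_prime hp.ne_zero).2 hp)

instance : IsDomain quarticCurveRing := by
  have h := prime_X_one_sq_sub_aeval (Polynomial.pow_two_ne_of_eval_neg (r := (1 : ℚ))
    (p := (Polynomial.X ^ 2 - 2 * Polynomial.X - 1) * (Polynomial.X ^ 2 + 2 * Polynomial.X - 1))
    (by norm_num))
  simp only [map_mul, map_sub, map_add, map_pow, map_ofNat, map_one, Polynomial.aeval_X] at h
  exact Ideal.Quotient.isDomain_span_singleton h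

instance : IsDomain ellipticCurveRing := by
  have h := prime_X_one_sq_sub_aeval (Polynomial.pow_two_ne_of_eval_neg (r := (-2 : ℚ))
    (p := Polynomial.X ^ 3 - Polynomial.X) (by norm_num))
  simp only [map_sub, map_pow, Polynomial.aeval_X] at h
  exact Ideal.Quotient.isDomain_span_singleton h

namespace MvPolynomial

variable {σ R S : Type*} [CommRing R] [CommSemiring S] [Algebra R S]

noncomputable def aevalQuotientSpan (p : MvPolynomial σ R) (v : σ → S) (hv : aeval v p = 0) :
    MvPolynomial σ R ⧸ Ideal.span {p} →+* S :=
  Ideal.Quotient.lift _ (aeval v).toRingHom fun a ha => by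
    obtain ⟨c, rfl⟩ := Ideal.mem_span_singleton'.1 ha
    simp [hv]

@[simp]
theorem aevalQuotientSpan_mk {p : MvPolynomial σ R} {v : σ → S} (hv : aeval v p = 0)
    (a : MvPolynomial σ R) : aevalQuotientSpan p v hv (Ideal.Quotient.mk _ a) = aeval v a :=
  rfl

theorem mk_span_ne_zero_of_eval {p a : MvPolynomial σ R} (v : σ → R) (hp : eval v p = 0)
    (ha : eval v a ≠ 0) : Ideal.Quotient.mk (Ideal.span {p}) a ≠ 0 := by
  rw [Ne, Ideal.Quotient.eq_zero_iff_mem, Ideal.mem_span_singleton']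
  rintro ⟨c, rfl⟩
  simp [hp] at ha

end MvPolynomial

section RationalQuotient

variable {σ S : Type*} {I : Ideal (MvPolynomial σ ℚ)}

theorem Ideal.Quotient.mvPolynomial_ringHom_ext [Semiring S] {f g : MvPolynomial σ ℚ ⧸ I →+* S}
    (h : ∀ i, f (Ideal.Quotient.mk I (X i)) = g (Ideal.Quotient.mk I (X i))) : f = g :=
  Ideal.Quotient.ringHom_ext <| MvPolynomial.ringHom_ext
    (RingHom.congr_fun (RingHom.ext_rat ((f.comp (Ideal.Quotient.mk I)).comp C)
      ((g.comp (Ideal.Quotient.mk I)).comp C))) h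

@[simp]
theorem map_mk_C_rat [DivisionRing S] (f : MvPolynomial σ ℚ ⧸ I →+* S) (q : ℚ) :
    f (Ideal.Quotient.mk I (C q)) = q :=
  eq_ratCast ((f.comp (Ideal.Quotient.mk I)).comp C) q

end RationalQuotient

namespace IsFractionRing

open Function

variable {A B K L : Type*} [CommRing A] [Field K] [Algebra A K] [IsFractionRing A K]
  [CommRing B] [Field L] [Algebra B L] [IsFractionRing B L]
  {f : A →+* L} {g : B →+* K}

theorem lift_comp_lift_eq_id (hf : Injective f) (hg : Injective g)
    (hfg : (lift hf).comp g = algebraMap B L) : (lift hf).comp (lift hg) = RingHom.id L :=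
  IsLocalization.ringHom_ext (nonZeroDivisors B) <| RingHom.ext fun b => by
    simpa using RingHom.congr_fun hfg b

noncomputable def ringEquivOfLiftComp (hf : Injective f) (hg : Injective g)
    (hgf : (lift hg).comp f = algebraMap A K) (hfg : (lift hf).comp g = algebraMap B L) :
    K ≃+* L :=
  RingEquiv.ofRingHom (lift hf) (lift hg) (lift_comp_lift_eq_id hf hg hfg)
    (lift_comp_lift_eq_id hg hf hgf)

end IsFractionRing

instance : CharZero quarticCurveRing := algebraRat.charZero _

instance : CharZero ellipticCurveRing := algebraRat.charZero _

noncomputable abbrev quarticMk : MvPolynomial (Fin 2) ℚ →+* quarticCurveRing := Ideal.Quotient.mk _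

noncomputable abbrev ellipticMk : MvPolynomial (Fin 2) ℚ →+* ellipticCurveRing := Ideal.Quotient.mk _

local notation "𝐭" => algebraMap quarticCurveRing (FractionRing quarticCurveRing) (quarticMk (X 0))
local notation "𝐬" => algebraMap quarticCurveRing (FractionRing quarticCurveRing) (quarticMk (X 1))
local notation "𝐱" => algebraMap ellipticCurveRing (FractionRing ellipticCurveRing) (ellipticMk (X 0))
local notation "𝐲" => algebraMap ellipticCurveRing (FractionRing ellipticCurveRing) (ellipticMk (X 1))

theorem quartic_equation : 𝐬 ^ 2 = (𝐭 ^ 2 - 2 * 𝐭 - 1) * (𝐭 ^ 2 + 2 * 𝐭 - 1) := by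
  rw [← sub_eq_zero]
  have h : quarticMk (X 1 ^ 2 - (X 0 ^ 2 - 2 * X 0 - 1) * (X 0 ^ 2 + 2 * X 0 - 1)) = 0 :=
    Ideal.Quotient.eq_zero_iff_mem.2 (Ideal.mem_span_singleton_self _)
  simpa only [map_sub, map_mul, map_pow, map_add, map_ofNat, map_one, map_zero]
    using congrArg (algebraMap quarticCurveRing (FractionRing quarticCurveRing)) h

theorem elliptic_equation : 𝐲 ^ 2 = 𝐱 ^ 3 - 𝐱 := by
  rw [← sub_eq_zero]
  have h : ellipticMk (X 1 ^ 2 - (X 0 ^ 3 - X 0)) = 0 :=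
    Ideal.Quotient.eq_zero_iff_mem.2 (Ideal.mem_span_singleton_self _)
  simpa only [map_sub, map_pow, map_zero]
    using congrArg (algebraMap ellipticCurveRing (FractionRing ellipticCurveRing)) h

theorem elliptic_x_sub_one_ne_zero : 𝐱 - 1 ≠ 0 := by
  have h : ellipticMk (X 0 - 1) ≠ 0 := mk_span_ne_zero_of_eval ![0, 0] (by simp) (by simp)
  simpa only [map_sub, map_one] using (map_ne_zero_iff _
    (IsFractionRing.injective ellipticCurveRing (FractionRing ellipticCurveRing))).2 h

noncomputable def ellipticToQuartic : ellipticCurveRing →+* quarticCurveRing :=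
  aevalQuotientSpan _
    ![quarticMk (C 2⁻¹ * (X 1 + X 0 ^ 2 - 1)), quarticMk (C 2⁻¹ * (X 0 * (X 1 + X 0 ^ 2 - 3)))] (by
      apply IsFractionRing.injective quarticCurveRing (FractionRing quarticCurveRing)
      simp only [aeval_X, map_sub, map_mul, map_add, map_pow, map_ofNat, map_one, map_zero,
        map_mk_C_rat, Rat.cast_inv, Rat.cast_ofNat, Matrix.cons_val_zero, Matrix.cons_val_one]
      linear_combination (3 - 𝐭 ^ 2 - 𝐬) / 8 * quartic_equation)

noncomputable def quarticToEllipticFrac : quarticCurveRing →+* FractionRing ellipticCurveRing :=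
  aevalQuotientSpan _ ![𝐲 / (𝐱 - 1), (𝐱 ^ 2 - 2 * 𝐱 - 1) / (𝐱 - 1)] (by
    have := elliptic_x_sub_one_ne_zero
    simp only [aeval_X, map_sub, map_mul, map_add, map_pow, map_ofNat, map_one,
      Matrix.cons_val_zero, Matrix.cons_val_one]
    field_simp
    linear_combination (6 * (𝐱 - 1) ^ 2 - 𝐲 ^ 2 - 𝐱 ^ 3 + 𝐱) * elliptic_equation)

theorem algebraMap_ellipticToQuartic_sub_one_ne_zero :
    algebraMap quarticCurveRing (FractionRing quarticCurveRing)
      (ellipticToQuartic (ellipticMk (X 0))) - 1 ≠ 0 := by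
  have h : quarticMk (C 2⁻¹ * (X 1 + X 0 ^ 2 - 1) - 1) ≠ 0 :=
    mk_span_ne_zero_of_eval ![0, 1] (by simp) (by simp)
  simpa only [ellipticToQuartic, aevalQuotientSpan_mk, aeval_X, Matrix.cons_val_zero, map_sub,
    map_one] using (map_ne_zero_iff _
      (IsFractionRing.injective quarticCurveRing (FractionRing quarticCurveRing))).2 h

theorem quarticToEllipticFrac_comp_ellipticToQuartic :
    quarticToEllipticFrac.comp ellipticToQuartic =
      algebraMap ellipticCurveRing (FractionRing ellipticCurveRing) := by
  have hx := elliptic_x_sub_one_ne_zero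
  refine Ideal.Quotient.mvPolynomial_ringHom_ext (Fin.forall_fin_two.2 ⟨?_, ?_⟩) <;>
  simp only [RingHom.comp_apply, ellipticToQuartic, quarticToEllipticFrac, aevalQuotientSpan_mk,
    aeval_X, aeval_C, eq_ratCast, map_sub, map_mul, map_add, map_pow, map_ofNat, map_one,
    Rat.cast_inv, Rat.cast_ofNat, Matrix.cons_val_zero, Matrix.cons_val_one]
  · field_simp
    linear_combination elliptic_equation
  · field_simp
    linear_combination 𝐲 * elliptic_equation

theorem ellipticToQuartic_injective : Function.Injective ellipticToQuartic :=
  Function.Injective.of_comp (f := quarticToEllipticFrac) <| by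
    rw [← RingHom.coe_comp, quarticToEllipticFrac_comp_ellipticToQuartic]
    exact IsFractionRing.injective _ _

theorem algebraMap_comp_ellipticToQuartic_injective :
    Function.Injective
      ((algebraMap quarticCurveRing (FractionRing quarticCurveRing)).comp ellipticToQuartic) := by
  rw [RingHom.coe_comp]
  exact (IsFractionRing.injective _ _).comp ellipticToQuartic_injective

theorem lift_comp_quarticToEllipticFrac :
    (IsFractionRing.lift algebraMap_comp_ellipticToQuartic_injective).comp quarticToEllipticFrac =
      algebraMap quarticCurveRing (FractionRing quarticCurveRing) := by
  have hx := algebraMap_ellipticToQuartic_sub_one_ne_zero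
  refine Ideal.Quotient.mvPolynomial_ringHom_ext (Fin.forall_fin_two.2 ⟨?_, ?_⟩) <;>
  simp only [RingHom.comp_apply, quarticToEllipticFrac, aevalQuotientSpan_mk, aeval_X,
    Matrix.cons_val_zero, Matrix.cons_val_one, map_div₀, map_sub, map_mul, map_pow, map_ofNat,
    map_one, IsFractionRing.lift_algebraMap] <;>
  rw [div_eq_iff hx] <;>
  simp only [ellipticToQuartic, aevalQuotientSpan_mk, aeval_X, Matrix.cons_val_zero,
    Matrix.cons_val_one, map_sub, map_mul, map_add, map_pow, map_ofNat, map_one, map_mk_C_rat,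
    Rat.cast_inv, Rat.cast_ofNat]
  · ring
  · linear_combination (-1 / 4 : FractionRing quarticCurveRing) * quartic_equation

theorem quarticToEllipticFrac_injective : Function.Injective quarticToEllipticFrac :=
  Function.Injective.of_comp
    (f := IsFractionRing.lift algebraMap_comp_ellipticToQuartic_injective) <| by
    rw [← RingHom.coe_comp, lift_comp_quarticToEllipticFrac]
    exact IsFractionRing.injective _ _

theorem lift_comp_algebraMap_comp_ellipticToQuartic :
    (IsFractionRing.lift quarticToEllipticFrac_injective).comp
        ((algebraMap quarticCurveRing (FractionRing quarticCurveRing)).comp ellipticToQuartic) =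
      algebraMap ellipticCurveRing (FractionRing ellipticCurveRing) := by
  rw [← quarticToEllipticFrac_comp_ellipticToQuartic]
  refine RingHom.ext fun b => ?_
  simp only [RingHom.comp_apply, IsFractionRing.lift_algebraMap]

noncomputable def functionFieldEquiv :
    FractionRing quarticCurveRing ≃+* FractionRing ellipticCurveRing :=
  IsFractionRing.ringEquivOfLiftComp quarticToEllipticFrac_injective
    algebraMap_comp_ellipticToQuartic_injective lift_comp_quarticToEllipticFrac
    lift_comp_algebraMap_comp_ellipticToQuartic

/-- The affine plane curve `s² = (t² − 2t − 1)(t² + 2t − 1)` is birationally equivalent over `ℚ`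
to the elliptic curve `y² = x³ − x`: their function fields are isomorphic as `ℚ`-extensions. -/
theorem quartic_birational_to_X148 :
    ∃ e : FractionRing quarticCurveRing ≃+* FractionRing ellipticCurveRing,
      ∀ q : ℚ,
        e (algebraMap quarticCurveRing (FractionRing quarticCurveRing)
            (algebraMap ℚ quarticCurveRing q)) =
          algebraMap ellipticCurveRing (FractionRing ellipticCurveRing)
            (algebraMap ℚ ellipticCurveRing q) :=
  ⟨functionFieldEquiv, fun q => by simp⟩
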